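/- arXiv:math/0702818 — 2 statements merged into one kernel-verified Lean document; each statement's English description precedes it below -/
import Mathlib

section
/- The vector w = ∇_{H^n}ρ/|∇_{H^n}ρ| is an eigenvector of the Heisenberg Hessian D²_{H^n}f(ρ) with eigenvalue |∇_{H^n}ρ|²f''(ρ), at any point where ∇_{H^n}ρ ≠ 0. -/
open scoped BigOperators

noncomputable section

/-- Direction vector of the Heisenberg vector field `X_i` at the point `ξ ∈ ℝ^{2n+1}`:
for `i < n`, `X_i = ∂_i + 2 ξ_{i+n} ∂_{2n}`; for `n ≤ i < 2n`, `X_i = ∂_i - 2 ξ_{i-n} ∂_{2n}`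
(indices `0,…,2n`, the last coordinate being index `2n`). -/
def Xvec (n : ℕ) (ξ : Fin (2*n+1) → ℝ) (i : Fin (2*n)) : Fin (2*n+1) → ℝ :=
  fun j =>
    (if (j : ℕ) = (i : ℕ) then 1 else 0) +
    (if (j : ℕ) = 2*n then
        (if h : (i : ℕ) < n then 2 * ξ ⟨(i : ℕ) + n, by omega⟩
         else -2 * ξ ⟨(i : ℕ) - n, by have := i.isLt; omega⟩)
      else 0)

/-- The Heisenberg vector field `X_i` acting on a function. -/
def X (n : ℕ) (i : Fin (2*n)) (f : (Fin (2*n+1) → ℝ) → ℝ)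
    (ξ : Fin (2*n+1) → ℝ) : ℝ :=
  fderiv ℝ f ξ (Xvec n ξ i)

/-- `∑_{i=1}^{2n} ξ_i²`, the squared euclidean norm of the horizontal coordinates. -/
def hsq (n : ℕ) (ξ : Fin (2*n+1) → ℝ) : ℝ :=
  ∑ i : Fin (2*n), (ξ ⟨(i : ℕ), by have := i.isLt; omega⟩)^2

/-- The homogeneous norm `ρ(ξ) = ((∑ ξ_i²)² + ξ_{2n+1}²)^{1/4}`. -/
def rho (n : ℕ) (ξ : Fin (2*n+1) → ℝ) : ℝ :=
  ((hsq n ξ)^2 + (ξ ⟨2*n, by omega⟩)^2) ^ (1/4 : ℝ)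

/-- `|∇_{H^n}ρ(ξ)|²`. -/
def gradSq (n : ℕ) (ξ : Fin (2*n+1) → ℝ) : ℝ :=
  ∑ i : Fin (2*n), (X n i (rho n) ξ)^2

/-- The symmetrized Heisenberg Hessian `D²_{H^n} f = (X_i X_j f)_{sym}`. -/
def HessH (n : ℕ) (f : (Fin (2*n+1) → ℝ) → ℝ) (ξ : Fin (2*n+1) → ℝ) :
    Matrix (Fin (2*n)) (Fin (2*n)) ℝ :=
  Matrix.of fun i j =>
    (X n i (fun η => X n j f η) ξ + X n j (fun η => X n i f η) ξ) / 2

namespace Hsb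

variable (n : ℕ)

/-- index embedding -/
def ι (i : Fin (2*n)) : Fin (2*n+1) := ⟨(i : ℕ), by have := i.isLt; omega⟩

def lastIdx : Fin (2*n+1) := ⟨2*n, by omega⟩

def tc (ξ : Fin (2*n+1) → ℝ) : ℝ := ξ (lastIdx n)

/-- coefficient of ∂_t in X_i -/
def cc (i : Fin (2*n)) (ξ : Fin (2*n+1) → ℝ) : ℝ :=
  if h : (i : ℕ) < n then 2 * ξ ⟨(i : ℕ) + n, by omega⟩
  else -2 * ξ ⟨(i : ℕ) - n, by have := i.isLt; omega⟩

def q (i : Fin (2*n)) (ξ : Fin (2*n+1) → ℝ) : ℝ :=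
  hsq n ξ * ξ (ι n i) + tc n ξ * cc n i ξ / 2

def uu (ξ : Fin (2*n+1) → ℝ) : ℝ := (hsq n ξ)^2 + (tc n ξ)^2

def G (i : Fin (2*n)) (ξ : Fin (2*n+1) → ℝ) : ℝ :=
  uu n ξ ^ (-(3/4) : ℝ) * q n i ξ

lemma Xvec_ι (ξ : Fin (2*n+1) → ℝ) (i k : Fin (2*n)) :
    Xvec n ξ i (ι n k) = if k = i then 1 else 0 := by
  have hk : ((ι n k : Fin (2*n+1)) : ℕ) = (k : ℕ) := rfl
  have h2 : (k : ℕ) ≠ 2*n := by have := k.isLt; omega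
  simp only [Xvec, hk, h2, if_false, add_zero, Fin.val_eq_val]

lemma Xvec_last (ξ : Fin (2*n+1) → ℝ) (i : Fin (2*n)) :
    Xvec n ξ i (lastIdx n) = cc n i ξ := by
  have h1 : ¬ (2*n = (i : ℕ)) := by have := i.isLt; omega
  simp [Xvec, lastIdx, cc, h1]

lemma rho_eq (ξ : Fin (2*n+1) → ℝ) : rho n ξ = uu n ξ ^ (1/4 : ℝ) := rfl

lemma uu_nonneg (ξ : Fin (2*n+1) → ℝ) : 0 ≤ uu n ξ :=
  add_nonneg (sq_nonneg _) (sq_nonneg _)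

lemma uu_pos_of_rho (ξ : Fin (2*n+1) → ℝ) (hr : 0 < rho n ξ) : 0 < uu n ξ := by
  rcases lt_or_eq_of_le (uu_nonneg n ξ) with h | h
  · exact h
  · exfalso
    rw [rho_eq, ← h, Real.zero_rpow (by norm_num)] at hr
    exact lt_irrefl 0 hr

/-- derivative of hsq -/
abbrev proj' (j : Fin (2*n+1)) : (Fin (2*n+1) → ℝ) →L[ℝ] ℝ :=
  ContinuousLinearMap.proj (R := ℝ) (φ := fun _ : Fin (2*n+1) => ℝ) j

def Lp (ξ : Fin (2*n+1) → ℝ) : (Fin (2*n+1) → ℝ) →L[ℝ] ℝ :=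
  ∑ i : Fin (2*n), (2 * ξ (ι n i)) • proj' n (ι n i)

lemma hasFDerivAt_hsq (ξ : Fin (2*n+1) → ℝ) :
    HasFDerivAt (hsq n) (Lp n ξ) ξ := by
  have : ∀ i : Fin (2*n), HasFDerivAt (fun η : Fin (2*n+1) → ℝ => (η (ι n i))^2)
      ((2 * ξ (ι n i)) • proj' n (ι n i)) ξ := by
    intro i
    have h1 : HasFDerivAt (fun η : Fin (2*n+1) → ℝ => η (ι n i))
        (proj' n (ι n i)) ξ := (proj' n (ι n i)).hasFDerivAt
    have h2 : HasDerivAt (fun y : ℝ => y^2) (2 * ξ (ι n i)) (ξ (ι n i)) := by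
      simpa using hasDerivAt_pow 2 (ξ (ι n i))
    exact h2.comp_hasFDerivAt ξ h1
  have hsum : HasFDerivAt (fun η : Fin (2*n+1) → ℝ => ∑ i : Fin (2*n), (η (ι n i))^2)
      (Lp n ξ) ξ := by
    rw [Lp]; exact HasFDerivAt.fun_sum (fun i _ => this i)
  exact hsum

end Hsb

namespace Hsb

variable (n : ℕ)

lemma proj'_apply (j : Fin (2*n+1)) (v : Fin (2*n+1) → ℝ) : proj' n j v = v j := rfl

lemma Lp_apply (ξ v : Fin (2*n+1) → ℝ) :
    Lp n ξ v = ∑ i : Fin (2*n), 2 * ξ (ι n i) * v (ι n i) := by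
  simp [Lp, mul_assoc]

lemma Lp_Xvec (ξ : Fin (2*n+1) → ℝ) (i : Fin (2*n)) :
    Lp n ξ (Xvec n ξ i) = 2 * ξ (ι n i) := by
  rw [Lp_apply]
  rw [Finset.sum_eq_single i]
  · rw [Xvec_ι, if_pos rfl, mul_one]
  · intro k _ hk
    rw [Xvec_ι, if_neg hk, mul_zero]
  · intro h; exact absurd (Finset.mem_univ i) h

/-- derivative of uu -/
def Lu (ξ : Fin (2*n+1) → ℝ) : (Fin (2*n+1) → ℝ) →L[ℝ] ℝ :=
  (2 * hsq n ξ) • Lp n ξ + (2 * tc n ξ) • proj' n (lastIdx n)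

lemma hasFDerivAt_tc (ξ : Fin (2*n+1) → ℝ) :
    HasFDerivAt (tc n) (proj' n (lastIdx n)) ξ := (proj' n (lastIdx n)).hasFDerivAt

lemma hasFDerivAt_uu (ξ : Fin (2*n+1) → ℝ) :
    HasFDerivAt (uu n) (Lu n ξ) ξ := by
  have h1 := (hasFDerivAt_hsq n ξ).mul (hasFDerivAt_hsq n ξ)
  have h2 := (hasFDerivAt_tc n ξ).mul (hasFDerivAt_tc n ξ)
  have := h1.add h2
  have heq : (hsq n * hsq n + tc n * tc n) = uu n := by
    funext η; simp [uu, sq]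
  rw [heq] at this
  refine this.congr_fderiv ?_
  rw [Lu]
  ext v
  simp [two_mul]
  ring

lemma Lu_Xvec (ξ : Fin (2*n+1) → ℝ) (i : Fin (2*n)) :
    Lu n ξ (Xvec n ξ i) = 4 * q n i ξ := by
  simp only [Lu, ContinuousLinearMap.add_apply, ContinuousLinearMap.smul_apply,
    Lp_Xvec, proj'_apply, Xvec_last, smul_eq_mul, q]
  ring

lemma hasFDerivAt_rho (ξ : Fin (2*n+1) → ℝ) (hu : 0 < uu n ξ) :
    HasFDerivAt (rho n) ((1/4 * uu n ξ ^ (-(3/4) : ℝ)) • Lu n ξ) ξ := by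
  have h1 : HasDerivAt (fun y : ℝ => y ^ (1/4 : ℝ))
      (1/4 * uu n ξ ^ ((1/4 : ℝ) - 1)) (uu n ξ) :=
    Real.hasDerivAt_rpow_const (Or.inl hu.ne')
  have h2 := h1.comp_hasFDerivAt ξ (hasFDerivAt_uu n ξ)
  have : rho n = (fun y : ℝ => y ^ (1/4:ℝ)) ∘ uu n := rfl
  rw [this]
  have he : (1/4 : ℝ) - 1 = -(3/4) := by norm_num
  rw [he] at h2
  exact h2

lemma X_rho (ξ : Fin (2*n+1) → ℝ) (hu : 0 < uu n ξ) (i : Fin (2*n)) :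
    X n i (rho n) ξ = G n i ξ := by
  rw [X, (hasFDerivAt_rho n ξ hu).fderiv]
  simp only [ContinuousLinearMap.smul_apply, Lu_Xvec, smul_eq_mul, G]
  ring

end Hsb

namespace Hsb

variable (n : ℕ)

/-- derivative of cc -/
def Lc (b : Fin (2*n)) : (Fin (2*n+1) → ℝ) →L[ℝ] ℝ :=
  if h : (b : ℕ) < n then (2:ℝ) • proj' n ⟨(b:ℕ) + n, by omega⟩
  else (-2:ℝ) • proj' n ⟨(b:ℕ) - n, by have := b.isLt; omega⟩

lemma hasFDerivAt_cc (b : Fin (2*n)) (ξ : Fin (2*n+1) → ℝ) :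
    HasFDerivAt (cc n b) (Lc n b) ξ := by
  by_cases h : (b : ℕ) < n
  · have : cc n b = fun η : Fin (2*n+1) → ℝ => 2 * η ⟨(b:ℕ) + n, by omega⟩ := by
      funext η; rw [cc, dif_pos h]
    rw [this, Lc, dif_pos h]
    exact (proj' n ⟨(b:ℕ) + n, by omega⟩).hasFDerivAt.const_mul 2
  · have : cc n b = fun η : Fin (2*n+1) → ℝ =>
        -2 * η ⟨(b:ℕ) - n, by have := b.isLt; omega⟩ := by
      funext η; rw [cc, dif_neg h]
    rw [this, Lc, dif_neg h]
    exact (proj' n ⟨(b:ℕ) - n, by have := b.isLt; omega⟩).hasFDerivAt.const_mul (-2)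

/-- value of Lc on Xvec -/
def lc (a b : Fin (2*n)) : ℝ :=
  if (b : ℕ) < n then (if (a : ℕ) = (b : ℕ) + n then 2 else 0)
  else (if (a : ℕ) = (b : ℕ) - n then -2 else 0)

lemma Lc_Xvec (ξ : Fin (2*n+1) → ℝ) (a b : Fin (2*n)) :
    Lc n b (Xvec n ξ a) = lc n a b := by
  by_cases h : (b : ℕ) < n
  · rw [Lc, dif_pos h, lc, if_pos h]
    have hb : (⟨(b:ℕ) + n, by omega⟩ : Fin (2*n+1)) = ι n ⟨(b:ℕ) + n, by omega⟩ := rfl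
    rw [ContinuousLinearMap.smul_apply, proj'_apply, hb, Xvec_ι]
    simp only [smul_eq_mul, Fin.ext_iff]
    by_cases hab : (a : ℕ) = (b : ℕ) + n
    · rw [if_pos hab.symm, if_pos hab]; norm_num
    · rw [if_neg (fun hh => hab hh.symm), if_neg hab]; norm_num
  · rw [Lc, dif_neg h, lc, if_neg h]
    have hbn : (b:ℕ) - n < 2*n := by have := b.isLt; omega
    have hb : (⟨(b:ℕ) - n, by omega⟩ : Fin (2*n+1)) = ι n ⟨(b:ℕ) - n, hbn⟩ := rfl
    rw [ContinuousLinearMap.smul_apply, proj'_apply, hb, Xvec_ι]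
    simp only [smul_eq_mul, Fin.ext_iff]
    by_cases hab : (a : ℕ) = (b : ℕ) - n
    · rw [if_pos hab.symm, if_pos hab]; norm_num
    · rw [if_neg (fun hh => hab hh.symm), if_neg hab]; norm_num

/-- derivative of q -/
def Lq (b : Fin (2*n)) (ξ : Fin (2*n+1) → ℝ) : (Fin (2*n+1) → ℝ) →L[ℝ] ℝ :=
  ξ (ι n b) • Lp n ξ + hsq n ξ • proj' n (ι n b) +
    (cc n b ξ / 2) • proj' n (lastIdx n) + (tc n ξ / 2) • Lc n b

lemma hasFDerivAt_q (b : Fin (2*n)) (ξ : Fin (2*n+1) → ℝ) :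
    HasFDerivAt (q n b) (Lq n b ξ) ξ := by
  have h1 := (hasFDerivAt_hsq n ξ).mul (proj' n (ι n b)).hasFDerivAt
  have h2 := ((hasFDerivAt_tc n ξ).mul (hasFDerivAt_cc n b ξ)).mul_const (2⁻¹ : ℝ)
  have h3 := h1.add h2
  have h4 : HasFDerivAt (q n b) (hsq n ξ • proj' n (ι n b) + ξ (ι n b) • Lp n ξ +
      (2⁻¹ : ℝ) • (tc n ξ • Lc n b + cc n b ξ • proj' n (lastIdx n))) ξ := h3
  refine h4.congr_fderiv ?_
  rw [Lq]
  ext v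
  simp only [ContinuousLinearMap.add_apply, ContinuousLinearMap.smul_apply,
    proj'_apply, smul_eq_mul]
  ring

/-- value of the derivative of `q b` on `Xvec a` -/
def Nq (a b : Fin (2*n)) (ξ : Fin (2*n+1) → ℝ) : ℝ :=
  2 * ξ (ι n a) * ξ (ι n b) + (if a = b then hsq n ξ else 0) +
    cc n b ξ * cc n a ξ / 2 + tc n ξ * lc n a b / 2

lemma Lq_Xvec (ξ : Fin (2*n+1) → ℝ) (a b : Fin (2*n)) :
    Lq n b ξ (Xvec n ξ a) = Nq n a b ξ := by
  simp only [Lq, ContinuousLinearMap.add_apply, ContinuousLinearMap.smul_apply,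
    proj'_apply, smul_eq_mul, Lp_Xvec, Xvec_last, Lc_Xvec, Nq]
  have : (ι n b : Fin (2*n+1)) = ι n b := rfl
  rw [Xvec_ι]
  by_cases hab : b = a
  · subst hab; rw [if_pos rfl, if_pos rfl]; ring
  · rw [if_neg hab, if_neg (fun h => hab h.symm)]; ring

/-- derivative of G -/
def LG (b : Fin (2*n)) (ξ : Fin (2*n+1) → ℝ) : (Fin (2*n+1) → ℝ) →L[ℝ] ℝ :=
  (q n b ξ * (-(3/4) * uu n ξ ^ (-(7/4) : ℝ))) • Lu n ξ +
    (uu n ξ ^ (-(3/4) : ℝ)) • Lq n b ξ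

lemma hasFDerivAt_G (b : Fin (2*n)) (ξ : Fin (2*n+1) → ℝ) (hu : 0 < uu n ξ) :
    HasFDerivAt (G n b) (LG n b ξ) ξ := by
  have h1 : HasDerivAt (fun y : ℝ => y ^ (-(3/4) : ℝ))
      (-(3/4) * uu n ξ ^ ((-(3/4) : ℝ) - 1)) (uu n ξ) :=
    Real.hasDerivAt_rpow_const (Or.inl hu.ne')
  have h2 := h1.comp_hasFDerivAt ξ (hasFDerivAt_uu n ξ)
  have h3 := h2.mul (hasFDerivAt_q n b ξ)
  have heq : ((fun y : ℝ => y ^ (-(3/4) : ℝ)) ∘ uu n * q n b) = G n b := rfl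
  rw [heq] at h3
  refine h3.congr_fderiv ?_
  rw [LG]
  ext v
  have he : ((-(3/4) : ℝ) - 1) = (-(7/4) : ℝ) := by norm_num
  simp only [ContinuousLinearMap.add_apply, ContinuousLinearMap.smul_apply, smul_eq_mul,
    Function.comp_apply, he]
  ring

lemma X_G (ξ : Fin (2*n+1) → ℝ) (hu : 0 < uu n ξ) (a b : Fin (2*n)) :
    X n a (G n b) ξ =
      -3 * uu n ξ ^ (-(7/4) : ℝ) * q n a ξ * q n b ξ +
        uu n ξ ^ (-(3/4) : ℝ) * Nq n a b ξ := by
  rw [X, (hasFDerivAt_G n b ξ hu).fderiv]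
  simp only [LG, ContinuousLinearMap.add_apply, ContinuousLinearMap.smul_apply,
    smul_eq_mul, Lu_Xvec, Lq_Xvec]
  ring

end Hsb

namespace Hsb

variable (n : ℕ)

def A (j : Fin n) : Fin (2*n) := ⟨(j : ℕ), by have := j.isLt; omega⟩
def B (j : Fin n) : Fin (2*n) := ⟨(j : ℕ) + n, by have := j.isLt; omega⟩

lemma sum_split (F : Fin (2*n) → ℝ) :
    ∑ a : Fin (2*n), F a = ∑ j : Fin n, (F (A n j) + F (B n j)) := by
  have e : n + n = 2*n := by ring
  have h1 : ∑ a : Fin (2*n), F a = ∑ a : Fin (n+n), F (finCongr e a) :=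
    (Fintype.sum_bijective (finCongr e) (finCongr e).bijective _ _ (fun a => rfl)).symm
  rw [h1, Fin.sum_univ_add, ← Finset.sum_add_distrib]
  refine Finset.sum_congr rfl (fun j _ => ?_)
  exact congrArg₂ (· + ·) (congrArg F (Fin.ext rfl))
    (congrArg F (Fin.ext (Nat.add_comm n (j : ℕ))))

variable (ξ : Fin (2*n+1) → ℝ)

lemma cc_A (j : Fin n) : cc n (A n j) ξ = 2 * ξ (ι n (B n j)) := by
  rw [cc, dif_pos (show ((A n j : Fin (2*n)) : ℕ) < n from j.isLt)]
  rfl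

lemma cc_B (j : Fin n) : cc n (B n j) ξ = -2 * ξ (ι n (A n j)) := by
  rw [cc, dif_neg (show ¬ ((B n j : Fin (2*n)) : ℕ) < n by simp [B])]
  congr 2
  exact Fin.ext (by simp [B, A, ι])

lemma q_A (j : Fin n) :
    q n (A n j) ξ = hsq n ξ * ξ (ι n (A n j)) + tc n ξ * ξ (ι n (B n j)) := by
  rw [q, cc_A]; ring

lemma q_B (j : Fin n) :
    q n (B n j) ξ = hsq n ξ * ξ (ι n (B n j)) - tc n ξ * ξ (ι n (A n j)) := by
  rw [q, cc_B]; ring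

lemma hsq_split : hsq n ξ = ∑ j : Fin n, (ξ (ι n (A n j))^2 + ξ (ι n (B n j))^2) := by
  have : hsq n ξ = ∑ a : Fin (2*n), (ξ (ι n a))^2 := rfl
  rw [this, sum_split]

lemma S1 : ∑ a : Fin (2*n), (q n a ξ)^2 = hsq n ξ * uu n ξ := by
  rw [sum_split, uu]
  have : ∀ j : Fin n, (q n (A n j) ξ)^2 + (q n (B n j) ξ)^2
      = ((hsq n ξ)^2 + (tc n ξ)^2) * (ξ (ι n (A n j))^2 + ξ (ι n (B n j))^2) := by
    intro j; rw [q_A, q_B]; ring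
  rw [Finset.sum_congr rfl (fun j _ => this j), ← Finset.mul_sum, ← hsq_split]
  ring

lemma S2 : ∑ a : Fin (2*n), ξ (ι n a) * q n a ξ = (hsq n ξ)^2 := by
  rw [sum_split]
  have : ∀ j : Fin n, ξ (ι n (A n j)) * q n (A n j) ξ + ξ (ι n (B n j)) * q n (B n j) ξ
      = hsq n ξ * (ξ (ι n (A n j))^2 + ξ (ι n (B n j))^2) := by
    intro j; rw [q_A, q_B]; ring
  rw [Finset.sum_congr rfl (fun j _ => this j), ← Finset.mul_sum, ← hsq_split]
  ring

lemma S3 : ∑ a : Fin (2*n), cc n a ξ * q n a ξ = 2 * tc n ξ * hsq n ξ := by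
  rw [sum_split]
  have : ∀ j : Fin n, cc n (A n j) ξ * q n (A n j) ξ + cc n (B n j) ξ * q n (B n j) ξ
      = 2 * tc n ξ * (ξ (ι n (A n j))^2 + ξ (ι n (B n j))^2) := by
    intro j; rw [q_A, q_B, cc_A, cc_B]; ring
  rw [Finset.sum_congr rfl (fun j _ => this j), ← Finset.mul_sum, ← hsq_split]

end Hsb

namespace Hsb

variable (n : ℕ) (ξ : Fin (2*n+1) → ℝ)

lemma SZ (i : Fin (2*n)) :
    ∑ a : Fin (2*n), q n a ξ * (lc n i a + lc n a i) = 0 := by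
  rw [sum_split]
  refine Finset.sum_eq_zero (fun j _ => ?_)
  have hj : (j : ℕ) < n := j.isLt
  have hi2 : (i : ℕ) < 2*n := i.isLt
  have hA : ((A n j : Fin (2*n)) : ℕ) = (j : ℕ) := rfl
  have hB : ((B n j : Fin (2*n)) : ℕ) = (j : ℕ) + n := rfl
  simp only [lc, hA, hB, if_pos hj, if_neg (show ¬ (j:ℕ) + n < n by omega),
    Nat.add_sub_cancel]
  split_ifs <;> first | ring1 | (exfalso; omega)

lemma Nq_sym (i a : Fin (2*n)) :
    Nq n i a ξ + Nq n a i ξ =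
      4 * ξ (ι n i) * ξ (ι n a) + 2 * (if i = a then hsq n ξ else 0) +
        cc n i ξ * cc n a ξ + tc n ξ * (lc n i a + lc n a i) / 2 := by
  by_cases h : i = a
  · subst h; simp only [Nq, if_pos rfl]; ring
  · simp only [Nq, if_neg h, if_neg (fun hh : a = i => h hh.symm)]; ring

lemma key (hu : 0 < uu n ξ) (i : Fin (2*n)) :
    ∑ a : Fin (2*n), G n a ξ * (X n i (G n a) ξ + X n a (G n i) ξ) = 0 := by
  have hdelta : ∑ a : Fin (2*n), (if i = a then hsq n ξ else 0) * q n a ξ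
      = hsq n ξ * q n i ξ := by
    rw [Finset.sum_eq_single i]
    · rw [if_pos rfl]
    · intro b _ hb; rw [if_neg (fun h => hb h.symm), zero_mul]
    · intro h; exact absurd (Finset.mem_univ i) h
  have hterm : ∀ a : Fin (2*n), G n a ξ * (X n i (G n a) ξ + X n a (G n i) ξ)
      = (-6 * (uu n ξ ^ (-(3/4):ℝ) * uu n ξ ^ (-(7/4):ℝ)) * q n i ξ) * (q n a ξ)^2
        + (4 * ξ (ι n i) * (uu n ξ ^ (-(3/4):ℝ))^2) * (ξ (ι n a) * q n a ξ)
        + (2 * (uu n ξ ^ (-(3/4):ℝ))^2) * ((if i = a then hsq n ξ else 0) * q n a ξ)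
        + (cc n i ξ * (uu n ξ ^ (-(3/4):ℝ))^2) * (cc n a ξ * q n a ξ)
        + (tc n ξ / 2 * (uu n ξ ^ (-(3/4):ℝ))^2) * (q n a ξ * (lc n i a + lc n a i)) := by
    intro a
    rw [G, X_G n ξ hu i a, X_G n ξ hu a i]
    have : uu n ξ ^ (-(3/4):ℝ) * (Nq n i a ξ + Nq n a i ξ) =
        uu n ξ ^ (-(3/4):ℝ) * (4 * ξ (ι n i) * ξ (ι n a) + 2 * (if i = a then hsq n ξ else 0) +
          cc n i ξ * cc n a ξ + tc n ξ * (lc n i a + lc n a i) / 2) := by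
      rw [Nq_sym]
    linear_combination (uu n ξ ^ (-(3/4):ℝ) * q n a ξ) * this
  rw [Finset.sum_congr rfl (fun a _ => hterm a)]
  simp only [Finset.sum_add_distrib, ← Finset.mul_sum]
  rw [S1, S2, S3, SZ, hdelta]
  have hmul : uu n ξ ^ (-(7/4):ℝ) * uu n ξ = uu n ξ ^ (-(3/4):ℝ) := by
    nth_rewrite 2 [← Real.rpow_one (uu n ξ)]
    rw [← Real.rpow_add hu]; norm_num
  have hq : q n i ξ = hsq n ξ * ξ (ι n i) + tc n ξ * cc n i ξ / 2 := rfl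
  linear_combination (-6 * uu n ξ ^ (-(3/4):ℝ) * q n i ξ * hsq n ξ) * hmul
    + (-4 * (uu n ξ ^ (-(3/4):ℝ))^2 * hsq n ξ) * hq

lemma continuous_uu : Continuous (uu n) :=
  continuous_iff_continuousAt.2 (fun η => (hasFDerivAt_uu n η).continuousAt)

end Hsb

open Hsb

/-- `w = ∇_{H^n}ρ / |∇_{H^n}ρ|` is an eigenvector of the Heisenberg
Hessian `D²_{H^n}(f ∘ ρ)` with eigenvalue `|∇_{H^n}ρ|² f''(ρ)`, at any point where
`∇_{H^n}ρ ≠ 0`. -/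
theorem heisenberg_radial_eigenvector_w (n : ℕ) (f : ℝ → ℝ)
    (hf : ContDiffOn ℝ 2 f (Set.Ioi 0)) (ξ : Fin (2*n+1) → ℝ)
    (hr : 0 < rho n ξ)
    (grad : Fin (2*n) → ℝ) (hgrad : grad = fun i => X n i (rho n) ξ)
    (hne : grad ≠ 0) :
    (HessH n (fun η => f (rho n η)) ξ).mulVec
        ((Real.sqrt (gradSq n ξ))⁻¹ • grad) =
      (gradSq n ξ * deriv (deriv f) (rho n ξ)) •
        ((Real.sqrt (gradSq n ξ))⁻¹ • grad) := by
  have hu : 0 < uu n ξ := uu_pos_of_rho n ξ hr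
  have hUopen : IsOpen {η : Fin (2*n+1) → ℝ | 0 < uu n η} :=
    isOpen_lt continuous_const (continuous_uu n)
  have hmem : ξ ∈ {η : Fin (2*n+1) → ℝ | 0 < uu n η} := hu
  have hgradG : grad = fun j => G n j ξ := by
    rw [hgrad]; funext j; exact X_rho n ξ hu j
  have hg2 : gradSq n ξ = ∑ j : Fin (2*n), (G n j ξ)^2 := by
    rw [gradSq]
    exact Finset.sum_congr rfl (fun j _ => by rw [X_rho n ξ hu j])
  -- positivity
  have g2pos : 0 < gradSq n ξ := by
    obtain ⟨j, hj⟩ := Function.ne_iff.1 hne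
    rw [hg2]
    refine Finset.sum_pos' (fun a _ => sq_nonneg _) ⟨j, Finset.mem_univ j, ?_⟩
    have : G n j ξ ≠ 0 := by rw [hgradG] at hj; exact hj
    positivity
  set s := Real.sqrt (gradSq n ξ) with hs_def
  have hs : 0 < s := Real.sqrt_pos.2 g2pos
  have hs2 : s^2 = gradSq n ξ := Real.sq_sqrt g2pos.le
  -- rho positive on U, f differentiable facts
  have hrho_pos : ∀ η ∈ {η : Fin (2*n+1) → ℝ | 0 < uu n η}, 0 < rho n η := by
    intro η hη; rw [rho_eq]; exact Real.rpow_pos_of_pos hη _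
  have hdf : ContDiffOn ℝ 1 (deriv f) (Set.Ioi 0) := by
    have h1 := hf.deriv_of_isOpen (m := 1) isOpen_Ioi (by norm_num)
    exact h1
  -- first derivative of f ∘ rho on U
  have hXcomp : ∀ j : Fin (2*n), ∀ η ∈ {η : Fin (2*n+1) → ℝ | 0 < uu n η},
      X n j (fun y => f (rho n y)) η = deriv f (rho n η) * G n j η := by
    intro j η hη
    have hfd : HasDerivAt f (deriv f (rho n η)) (rho n η) :=
      ((hf.contDiffAt (isOpen_Ioi.mem_nhds (hrho_pos η hη))).differentiableAt
        (by norm_num)).hasDerivAt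
    have hcomp := hfd.comp_hasFDerivAt η (hasFDerivAt_rho n η hη)
    have heq : (fun y => f (rho n y)) = f ∘ rho n := rfl
    rw [X, heq, hcomp.fderiv]
    simp only [ContinuousLinearMap.smul_apply, smul_eq_mul,
      ContinuousLinearMap.smul_apply, Lu_Xvec, G]
    ring
  -- second derivative entries
  have hentry : ∀ i j : Fin (2*n),
      X n i (fun η => X n j (fun y => f (rho n y)) η) ξ
        = deriv (deriv f) (rho n ξ) * G n i ξ * G n j ξ
          + deriv f (rho n ξ) * X n i (G n j) ξ := by
    intro i j
    have hev : (fun η => X n j (fun y => f (rho n y)) η)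
        =ᶠ[nhds ξ] (fun η => deriv f (rho n η) * G n j η) :=
      Filter.eventuallyEq_of_mem (hUopen.mem_nhds hmem) (fun η hη => hXcomp j η hη)
    have hd1 : HasFDerivAt (fun η => deriv f (rho n η))
        (deriv (deriv f) (rho n ξ) • ((1/4 * uu n ξ ^ (-(3/4):ℝ)) • Lu n ξ)) ξ := by
      have hdfd : HasDerivAt (deriv f) (deriv (deriv f) (rho n ξ)) (rho n ξ) :=
        ((hdf.contDiffAt (isOpen_Ioi.mem_nhds (hrho_pos ξ hmem))).differentiableAt
          (by norm_num)).hasDerivAt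
      exact hdfd.comp_hasFDerivAt ξ (hasFDerivAt_rho n ξ hu)
    have hd2 := hd1.mul (hasFDerivAt_G n j ξ hu)
    rw [X, hev.fderiv_eq, show (fun η => deriv f (rho n η) * G n j η) = (fun η => deriv f (rho n η)) * G n j from rfl, hd2.fderiv]
    have hXiG : X n i (G n j) ξ = LG n j ξ (Xvec n ξ i) := by
      rw [X, (hasFDerivAt_G n j ξ hu).fderiv]
    rw [hXiG]
    simp only [ContinuousLinearMap.add_apply, ContinuousLinearMap.smul_apply,
      smul_eq_mul, Lu_Xvec, G]
    ring
  -- final assembly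
  funext i
  simp only [Matrix.mulVec, dotProduct, HessH, Matrix.of_apply,
    Pi.smul_apply, smul_eq_mul, ← hs_def]
  have hsummand : ∀ j : Fin (2*n),
      (X n i (fun η => X n j (fun y => f (rho n y)) η) ξ
        + X n j (fun η => X n i (fun y => f (rho n y)) η) ξ) / 2 * (s⁻¹ * grad j)
      = (s⁻¹ * deriv (deriv f) (rho n ξ) * G n i ξ) * (G n j ξ)^2
        + (s⁻¹ * deriv f (rho n ξ) / 2)
            * (G n j ξ * (X n i (G n j) ξ + X n j (G n i) ξ)) := by
    intro j
    rw [hentry i j, hentry j i, hgradG]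
    ring
  rw [Finset.sum_congr rfl (fun j _ => hsummand j)]
  simp only [Finset.sum_add_distrib, ← Finset.mul_sum]
  rw [key n ξ hu i, ← hg2, hgradG]
  ring
end
end

section
/- The vector v = (X_{n+1}ρ, …, X_{2n}ρ, −X_1ρ, …, −X_nρ) is orthogonal to ∇_{H^n}ρ and is an eigenvector of D²_{H^n}f(ρ) with eigenvalue 3(f'(ρ)/ρ)|∇_{H^n}ρ|², at any point where ∇_{H^n}ρ ≠ 0. -/
open scoped BigOperators

noncomputable section

namespace HeisAux

variable {n : ℕ}

/-- Embedding of horizontal indices. -/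
def emb (n : ℕ) (i : Fin (2*n)) : Fin (2*n+1) := ⟨(i : ℕ), by have := i.isLt; omega⟩

/-- The vertical index. -/
def top (n : ℕ) : Fin (2*n+1) := ⟨2*n, by omega⟩

@[simp] lemma emb_val (i : Fin (2*n)) : ((emb n i : Fin (2*n+1)) : ℕ) = (i : ℕ) := rfl
@[simp] lemma top_val : ((top n : Fin (2*n+1)) : ℕ) = 2*n := rfl

/-- The symplectic partner index. -/
def bar (n : ℕ) (i : Fin (2*n)) : Fin (2*n) :=
  if h : (i : ℕ) < n then ⟨(i : ℕ) + n, by have := i.isLt; have := h; omega⟩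
  else ⟨(i : ℕ) - n, Nat.lt_of_le_of_lt (Nat.sub_le _ _) i.isLt⟩

/-- The sign `ε_i`. -/
def eps (n : ℕ) (i : Fin (2*n)) : ℝ := if (i : ℕ) < n then 1 else -1

lemma bar_val_of_lt {i : Fin (2*n)} (h : (i : ℕ) < n) : ((bar n i : Fin (2*n)) : ℕ) = (i : ℕ) + n := by
  simp [bar, h]

lemma bar_val_of_ge {i : Fin (2*n)} (h : ¬ (i : ℕ) < n) : ((bar n i : Fin (2*n)) : ℕ) = (i : ℕ) - n := by
  simp [bar, h]

lemma bar_bar (i : Fin (2*n)) : bar n (bar n i) = i := by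
  have hi := i.isLt
  by_cases h : (i : ℕ) < n
  · have h1 := bar_val_of_lt h
    have h2 : ¬ ((bar n i : Fin (2*n)) : ℕ) < n := by omega
    apply Fin.ext
    rw [bar_val_of_ge h2, h1]
    omega
  · have h1 := bar_val_of_ge h
    have h2 : ((bar n i : Fin (2*n)) : ℕ) < n := by omega
    apply Fin.ext
    rw [bar_val_of_lt h2, h1]
    omega

lemma eps_bar (i : Fin (2*n)) : eps n (bar n i) = - eps n i := by
  have hi := i.isLt
  by_cases h : (i : ℕ) < n
  · have h1 := bar_val_of_lt h
    have h2 : ¬ ((bar n i : Fin (2*n)) : ℕ) < n := by omega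
    simp [eps, h, h2]
  · have h1 := bar_val_of_ge h
    have h2 : ((bar n i : Fin (2*n)) : ℕ) < n := by omega
    simp [eps, h, h2]

lemma eps_sq (i : Fin (2*n)) : eps n i * eps n i = 1 := by
  unfold eps; split <;> norm_num

/-- The pairing as an equivalence. -/
def barEquiv (n : ℕ) : Equiv (Fin (2*n)) (Fin (2*n)) :=
  ⟨bar n, bar n, bar_bar, bar_bar⟩

/-- `U = s² + t²` where `s = hsq`, `t = ξ_{2n}`. -/
def U (n : ℕ) (ξ : Fin (2*n+1) → ℝ) : ℝ := (hsq n ξ)^2 + (ξ (top n))^2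

/-- `A_j = s ξ_j + ε_j t ξ_{j̄}`; one has `X_j ρ = U^{-3/4} A_j`. -/
def A (n : ℕ) (j : Fin (2*n)) (ξ : Fin (2*n+1) → ℝ) : ℝ :=
  hsq n ξ * ξ (emb n j) + eps n j * (ξ (top n) * ξ (emb n (bar n j)))

/-- `B_j = ε_j s ξ_{j̄} - t ξ_j = ε_j A_{j̄}`; the eigenvector is `v_j = U^{-3/4} B_j`. -/
def Bv (n : ℕ) (j : Fin (2*n)) (ξ : Fin (2*n+1) → ℝ) : ℝ :=
  eps n j * (hsq n ξ * ξ (emb n (bar n j))) - ξ (top n) * ξ (emb n j)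

lemma A_bar (j : Fin (2*n)) (ξ : Fin (2*n+1) → ℝ) :
    A n (bar n j) ξ = eps n j * Bv n j ξ := by
  unfold A Bv
  rw [eps_bar, bar_bar]
  linear_combination (-(hsq n ξ * ξ (emb n (bar n j)))) * eps_sq j

lemma hsq_eq (ξ : Fin (2*n+1) → ℝ) : hsq n ξ = ∑ j : Fin (2*n), (ξ (emb n j))^2 := rfl

lemma rho_eq (ξ : Fin (2*n+1) → ℝ) : rho n ξ = (U n ξ) ^ (1/4 : ℝ) := rfl

/-! ### Sum identities -/

lemma sum_bar (g : Fin (2*n) → ℝ) : ∑ j : Fin (2*n), g (bar n j) = ∑ j : Fin (2*n), g j :=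
  Equiv.sum_comp (barEquiv n) g

lemma S1 (ξ : Fin (2*n+1) → ℝ) :
    ∑ j : Fin (2*n), eps n j * (ξ (emb n j) * ξ (emb n (bar n j))) = 0 := by
  have h := sum_bar (fun j => eps n j * (ξ (emb n j) * ξ (emb n (bar n j))))
  have h2 : ∀ j : Fin (2*n),
      eps n (bar n j) * (ξ (emb n (bar n j)) * ξ (emb n (bar n (bar n j))))
        = -(eps n j * (ξ (emb n j) * ξ (emb n (bar n j)))) := by
    intro j; rw [eps_bar, bar_bar]; ring
  rw [Finset.sum_congr rfl (fun j _ => h2 j)] at h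
  rw [Finset.sum_neg_distrib] at h
  linarith

lemma S2 (ξ : Fin (2*n+1) → ℝ) :
    ∑ j : Fin (2*n), (ξ (emb n (bar n j)))^2 = hsq n ξ := by
  rw [hsq_eq]
  exact sum_bar (fun j => (ξ (emb n j))^2)

lemma T1 (ξ : Fin (2*n+1) → ℝ) :
    ∑ j : Fin (2*n), ξ (emb n j) * Bv n j ξ = -(ξ (top n) * hsq n ξ) := by
  have h : ∀ j : Fin (2*n), ξ (emb n j) * Bv n j ξ
      = hsq n ξ * (eps n j * (ξ (emb n j) * ξ (emb n (bar n j))))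
        - ξ (top n) * (ξ (emb n j))^2 := by
    intro j; unfold Bv; ring
  rw [Finset.sum_congr rfl (fun j _ => h j), Finset.sum_sub_distrib,
    ← Finset.mul_sum, ← Finset.mul_sum, S1, hsq_eq]
  ring

lemma T2 (ξ : Fin (2*n+1) → ℝ) :
    ∑ j : Fin (2*n), eps n j * ξ (emb n (bar n j)) * Bv n j ξ = (hsq n ξ)^2 := by
  have h : ∀ j : Fin (2*n), eps n j * ξ (emb n (bar n j)) * Bv n j ξ
      = hsq n ξ * (ξ (emb n (bar n j)))^2
        - ξ (top n) * (eps n j * (ξ (emb n j) * ξ (emb n (bar n j)))) := by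
    intro j; unfold Bv
    linear_combination (hsq n ξ * (ξ (emb n (bar n j)))^2) * eps_sq j
  rw [Finset.sum_congr rfl (fun j _ => h j), Finset.sum_sub_distrib,
    ← Finset.mul_sum, ← Finset.mul_sum, S1, S2]
  ring

lemma T3 (ξ : Fin (2*n+1) → ℝ) :
    ∑ j : Fin (2*n), A n j ξ * Bv n j ξ = 0 := by
  have h : ∀ j : Fin (2*n), A n j ξ * Bv n j ξ
      = ((hsq n ξ)^2 - (ξ (top n))^2) * (eps n j * (ξ (emb n j) * ξ (emb n (bar n j))))
        + (hsq n ξ * ξ (top n)) * (ξ (emb n (bar n j)))^2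
        - (hsq n ξ * ξ (top n)) * (ξ (emb n j))^2 := by
    intro j; unfold A Bv
    linear_combination (hsq n ξ * ξ (top n) * (ξ (emb n (bar n j)))^2) * eps_sq j
  calc ∑ j : Fin (2*n), A n j ξ * Bv n j ξ
      = ∑ j : Fin (2*n),
        (((hsq n ξ)^2 - (ξ (top n))^2) * (eps n j * (ξ (emb n j) * ξ (emb n (bar n j))))
        + (hsq n ξ * ξ (top n)) * (ξ (emb n (bar n j)))^2
        - (hsq n ξ * ξ (top n)) * (ξ (emb n j))^2) := Finset.sum_congr rfl (fun j _ => h j)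
    _ = 0 := by
        rw [Finset.sum_sub_distrib, Finset.sum_add_distrib,
          ← Finset.mul_sum, ← Finset.mul_sum, ← Finset.mul_sum, S1, S2, hsq_eq]
        ring

lemma T5 (ξ : Fin (2*n+1) → ℝ) :
    ∑ j : Fin (2*n), (A n j ξ)^2 = hsq n ξ * U n ξ := by
  have h : ∀ j : Fin (2*n), (A n j ξ)^2
      = (hsq n ξ)^2 * (ξ (emb n j))^2
        + (2 * hsq n ξ * ξ (top n)) * (eps n j * (ξ (emb n j) * ξ (emb n (bar n j))))
        + (ξ (top n))^2 * (ξ (emb n (bar n j)))^2 := by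
    intro j; unfold A
    linear_combination ((ξ (top n))^2 * (ξ (emb n (bar n j)))^2) * eps_sq j
  calc ∑ j : Fin (2*n), (A n j ξ)^2
      = ∑ j : Fin (2*n),
        ((hsq n ξ)^2 * (ξ (emb n j))^2
        + (2 * hsq n ξ * ξ (top n)) * (eps n j * (ξ (emb n j) * ξ (emb n (bar n j))))
        + (ξ (top n))^2 * (ξ (emb n (bar n j)))^2) := Finset.sum_congr rfl (fun j _ => h j)
    _ = hsq n ξ * U n ξ := by
        rw [Finset.sum_add_distrib, Finset.sum_add_distrib,
          ← Finset.mul_sum, ← Finset.mul_sum, ← Finset.mul_sum, S1, S2, ← hsq_eq]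
        unfold U; ring

/-- `X_i A_j` (value of the derivative of `A_j` in the direction `Xvec i`). -/
def XA (n : ℕ) (i j : Fin (2*n)) (ξ : Fin (2*n+1) → ℝ) : ℝ :=
  hsq n ξ * (if j = i then 1 else 0) + 2 * ξ (emb n i) * ξ (emb n j)
    + eps n j * ξ (top n) * (if bar n j = i then 1 else 0)
    + 2 * (eps n i * eps n j) * (ξ (emb n (bar n i)) * ξ (emb n (bar n j)))

lemma sym_delta (i j : Fin (2*n)) (ξ : Fin (2*n+1) → ℝ) :
    eps n j * ξ (top n) * (if bar n j = i then 1 else 0)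
      + eps n i * ξ (top n) * (if bar n i = j then 1 else 0) = 0 := by
  by_cases h : bar n j = i
  · have h2 : bar n i = j := by rw [← h, bar_bar]
    have h3 : eps n i = - eps n j := by rw [← h, eps_bar]
    rw [if_pos h, if_pos h2, h3]; ring
  · have h2 : ¬ bar n i = j := fun hc => h (by rw [← hc, bar_bar])
    rw [if_neg h, if_neg h2]; ring

lemma symXA (i j : Fin (2*n)) (ξ : Fin (2*n+1) → ℝ) :
    XA n i j ξ + XA n j i ξ
      = 2 * hsq n ξ * (if i = j then 1 else 0) + 4 * (ξ (emb n i) * ξ (emb n j))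
        + 4 * (eps n i * eps n j) * (ξ (emb n (bar n i)) * ξ (emb n (bar n j))) := by
  have hd := sym_delta i j ξ
  have he : (if (j : Fin (2*n)) = i then (1:ℝ) else 0) = (if i = j then 1 else 0) := by
    by_cases h : i = j
    · rw [if_pos h.symm, if_pos h]
    · rw [if_neg (fun hc => h hc.symm), if_neg h]
  unfold XA
  rw [he]
  linear_combination hd

lemma T4 (i : Fin (2*n)) (ξ : Fin (2*n+1) → ℝ) :
    ∑ j : Fin (2*n), (XA n i j ξ + XA n j i ξ) * Bv n j ξ = 6 * hsq n ξ * Bv n i ξ := by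
  have h : ∀ j : Fin (2*n), (XA n i j ξ + XA n j i ξ) * Bv n j ξ
      = 2 * hsq n ξ * (if i = j then Bv n j ξ else 0)
        + 4 * ξ (emb n i) * (ξ (emb n j) * Bv n j ξ)
        + (4 * eps n i * ξ (emb n (bar n i))) * (eps n j * ξ (emb n (bar n j)) * Bv n j ξ) := by
    intro j
    rw [symXA]
    by_cases hij : i = j
    · rw [if_pos hij, if_pos hij]; ring
    · rw [if_neg hij, if_neg hij]; ring
  rw [Finset.sum_congr rfl (fun j _ => h j), Finset.sum_add_distrib, Finset.sum_add_distrib,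
    ← Finset.mul_sum, ← Finset.mul_sum, ← Finset.mul_sum, Finset.sum_ite_eq, T1, T2]
  simp only [Finset.mem_univ, if_true]
  unfold Bv
  ring

/-! ### Calculus -/

/-- coordinate projection as a CLM -/
def pj (n : ℕ) (j : Fin (2*n+1)) : (Fin (2*n+1) → ℝ) →L[ℝ] ℝ :=
  ContinuousLinearMap.proj j

lemma hasFDerivAt_coord (j : Fin (2*n+1)) (ξ : Fin (2*n+1) → ℝ) :
    HasFDerivAt (fun η : Fin (2*n+1) → ℝ => η j) (pj n j) ξ :=
  (pj n j).hasFDerivAt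

lemma hasFDerivAt_sq (j : Fin (2*n+1)) (ξ : Fin (2*n+1) → ℝ) :
    HasFDerivAt (fun η : Fin (2*n+1) → ℝ => (η j)^2) ((2 * ξ j) • pj n j) ξ := by
  have h := (hasFDerivAt_coord j ξ).fun_mul (hasFDerivAt_coord j ξ)
  have h2 : HasFDerivAt (fun η : Fin (2*n+1) → ℝ => η j * η j) ((2 * ξ j) • pj n j) ξ := by
    refine h.congr_fderiv ?_
    ext w
    simp [ContinuousLinearMap.smul_apply, ContinuousLinearMap.add_apply, smul_eq_mul]
    ring
  exact h2.congr_of_eventuallyEq (Filter.Eventually.of_forall fun η => by ring)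

/-- derivative of `hsq` -/
def Ls (n : ℕ) (ξ : Fin (2*n+1) → ℝ) : (Fin (2*n+1) → ℝ) →L[ℝ] ℝ :=
  ∑ k : Fin (2*n), (2 * ξ (emb n k)) • pj n (emb n k)

lemma hasFDerivAt_hsq (ξ : Fin (2*n+1) → ℝ) : HasFDerivAt (hsq n) (Ls n ξ) ξ := by
  have h : HasFDerivAt (fun η : Fin (2*n+1) → ℝ => ∑ k : Fin (2*n), (η (emb n k))^2)
      (Ls n ξ) ξ :=
    HasFDerivAt.fun_sum (fun k _ => hasFDerivAt_sq (emb n k) ξ)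
  exact h

/-- derivative of `U` -/
def LU (n : ℕ) (ξ : Fin (2*n+1) → ℝ) : (Fin (2*n+1) → ℝ) →L[ℝ] ℝ :=
  (2 * hsq n ξ) • Ls n ξ + (2 * ξ (top n)) • pj n (top n)

lemma hasFDerivAt_U (ξ : Fin (2*n+1) → ℝ) : HasFDerivAt (U n) (LU n ξ) ξ := by
  have h1 : HasFDerivAt (fun η => (hsq n η)^2) ((2 * hsq n ξ) • Ls n ξ) ξ := by
    have h := (hasFDerivAt_hsq ξ).fun_mul (hasFDerivAt_hsq ξ)
    have h2 : HasFDerivAt (fun η => hsq n η * hsq n η) ((2 * hsq n ξ) • Ls n ξ) ξ := by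
      refine h.congr_fderiv ?_
      ext w
      simp [ContinuousLinearMap.smul_apply, ContinuousLinearMap.add_apply, smul_eq_mul]
      ring
    exact h2.congr_of_eventuallyEq (Filter.Eventually.of_forall fun η => by ring)
  exact h1.add (hasFDerivAt_sq (top n) ξ)

lemma continuous_U : Continuous (U n) := by
  have h1 : Continuous (hsq n) := by
    have : (hsq n) = fun η => ∑ k : Fin (2*n), (η (emb n k))^2 := rfl
    rw [this]
    exact continuous_finset_sum _ (fun k _ => (continuous_apply (emb n k)).pow 2)
  exact (h1.pow 2).add ((continuous_apply (top n)).pow 2)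

/-! ### evaluation of the derivative maps at `Xvec` -/

lemma Xvec_emb (ξ : Fin (2*n+1) → ℝ) (j k : Fin (2*n)) :
    Xvec n ξ j (emb n k) = if k = j then 1 else 0 := by
  have hk := k.isLt
  show (if ((emb n k : Fin (2*n+1)) : ℕ) = (j : ℕ) then (1:ℝ) else 0)
      + (if ((emb n k : Fin (2*n+1)) : ℕ) = 2*n then _ else 0) = _
  rw [emb_val, if_neg (by omega : ¬ (k : ℕ) = 2*n), add_zero]
  by_cases h : k = j
  · rw [if_pos (by rw [h]), if_pos h]
  · rw [if_neg (fun hc => h (Fin.ext hc)), if_neg h]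

lemma Xvec_top (ξ : Fin (2*n+1) → ℝ) (j : Fin (2*n)) :
    Xvec n ξ j (top n) = 2 * eps n j * ξ (emb n (bar n j)) := by
  have hj := j.isLt
  show (if ((top n : Fin (2*n+1)) : ℕ) = (j : ℕ) then (1:ℝ) else 0)
      + (if ((top n : Fin (2*n+1)) : ℕ) = 2*n then _ else 0) = _
  rw [top_val, if_neg (by omega : ¬ 2*n = (j : ℕ)), if_pos rfl, zero_add]
  by_cases h : (j : ℕ) < n
  · rw [dif_pos h]
    have hb : emb n (bar n j) = ⟨(j : ℕ) + n, by omega⟩ := by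
      apply Fin.ext; rw [emb_val, bar_val_of_lt h]
    rw [hb]
    unfold eps
    rw [if_pos h]
    ring
  · rw [dif_neg h]
    have hb : emb n (bar n j) = ⟨(j : ℕ) - n, by omega⟩ := by
      apply Fin.ext; rw [emb_val, bar_val_of_ge h]
    rw [hb]
    unfold eps
    rw [if_neg h]
    ring

lemma pj_apply (j : Fin (2*n+1)) (w : Fin (2*n+1) → ℝ) : pj n j w = w j := rfl

lemma Ls_apply_Xvec (ξ η : Fin (2*n+1) → ℝ) (j : Fin (2*n)) :
    Ls n η (Xvec n ξ j) = 2 * η (emb n j) := by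
  unfold Ls
  rw [ContinuousLinearMap.sum_apply]
  have h : ∀ k : Fin (2*n), ((2 * η (emb n k)) • pj n (emb n k)) (Xvec n ξ j)
      = if k = j then 2 * η (emb n k) else 0 := by
    intro k
    rw [ContinuousLinearMap.smul_apply, pj_apply, Xvec_emb]
    by_cases h : k = j
    · rw [if_pos h, if_pos h]; simp
    · rw [if_neg h, if_neg h]; simp
  rw [Finset.sum_congr rfl (fun k _ => h k), Finset.sum_ite_eq']
  simp

lemma LU_apply_Xvec (ξ η : Fin (2*n+1) → ℝ) (j : Fin (2*n)) :
    LU n η (Xvec n ξ j) = 2 * hsq n η * (2 * η (emb n j)) + 2 * η (top n) * Xvec n ξ j (top n) := by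
  unfold LU
  rw [ContinuousLinearMap.add_apply, ContinuousLinearMap.smul_apply,
    ContinuousLinearMap.smul_apply, pj_apply, Ls_apply_Xvec]
  simp [smul_eq_mul]

lemma LU_self_Xvec (ξ : Fin (2*n+1) → ℝ) (j : Fin (2*n)) :
    LU n ξ (Xvec n ξ j) = 4 * A n j ξ := by
  rw [LU_apply_Xvec, Xvec_top]
  unfold A
  ring

/-! ### first derivative of rho -/

lemma hasFDerivAt_rho {η : Fin (2*n+1) → ℝ} (hη : 0 < U n η) :
    HasFDerivAt (rho n) (((1/4 : ℝ) * (U n η) ^ (-(3:ℝ)/4)) • LU n η) η := by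
  have h := (Real.hasStrictDerivAt_rpow_const (x := U n η) (p := (1/4 : ℝ))
    (Or.inl hη.ne')).hasDerivAt
  have h2 := h.comp_hasFDerivAt η (hasFDerivAt_U η)
  have e : (1/4 : ℝ) * (U n η) ^ ((1:ℝ)/4 - 1) = (1/4 : ℝ) * (U n η) ^ (-(3:ℝ)/4) := by
    norm_num
  rw [e] at h2
  exact h2

lemma X_rho {η : Fin (2*n+1) → ℝ} (hη : 0 < U n η) (j : Fin (2*n)) :
    X n j (rho n) η = (U n η) ^ (-(3:ℝ)/4) * A n j η := by
  unfold X
  rw [(hasFDerivAt_rho hη).fderiv, ContinuousLinearMap.smul_apply, LU_self_Xvec]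
  simp [smul_eq_mul]
  ring

/-! ### derivatives involving `f` -/

lemma rho_pos {η : Fin (2*n+1) → ℝ} (hη : 0 < U n η) : 0 < rho n η := by
  rw [rho_eq]; exact Real.rpow_pos_of_pos hη _

variable {f : ℝ → ℝ}

lemma hasDerivAt_f (hf : ContDiffOn ℝ 2 f (Set.Ioi 0)) {η : Fin (2*n+1) → ℝ}
    (hη : 0 < U n η) : HasDerivAt f (deriv f (rho n η)) (rho n η) := by
  have h1 : ContDiffAt ℝ 2 f (rho n η) := hf.contDiffAt (Ioi_mem_nhds (rho_pos hη))
  exact (h1.differentiableAt (by norm_num)).hasDerivAt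

lemma hasFDerivAt_frho (hf : ContDiffOn ℝ 2 f (Set.Ioi 0)) {η : Fin (2*n+1) → ℝ}
    (hη : 0 < U n η) :
    HasFDerivAt (fun y => f (rho n y))
      ((deriv f (rho n η) * ((1/4 : ℝ) * (U n η) ^ (-(3:ℝ)/4))) • LU n η) η := by
  have h := (hasDerivAt_f hf hη).comp_hasFDerivAt η (hasFDerivAt_rho hη)
  rwa [smul_smul] at h

lemma X_frho (hf : ContDiffOn ℝ 2 f (Set.Ioi 0)) {η : Fin (2*n+1) → ℝ}
    (hη : 0 < U n η) (j : Fin (2*n)) :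
    X n j (fun y => f (rho n y)) η
      = deriv f (rho n η) * ((U n η) ^ (-(3:ℝ)/4) * A n j η) := by
  unfold X
  rw [(hasFDerivAt_frho hf hη).fderiv, ContinuousLinearMap.smul_apply, LU_self_Xvec]
  simp only [smul_eq_mul]
  ring

lemma hasFDerivAt_U34 {ξ : Fin (2*n+1) → ℝ} (hξ : 0 < U n ξ) :
    HasFDerivAt (fun η => (U n η) ^ (-(3:ℝ)/4))
      (((-(3:ℝ)/4) * (U n ξ) ^ (-(7:ℝ)/4)) • LU n ξ) ξ := by
  have h := (Real.hasStrictDerivAt_rpow_const (x := U n ξ) (p := (-(3:ℝ)/4))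
    (Or.inl hξ.ne')).hasDerivAt
  have h2 := h.comp_hasFDerivAt ξ (hasFDerivAt_U ξ)
  have e : (-(3:ℝ)/4 : ℝ) - 1 = -(7:ℝ)/4 := by norm_num
  rw [e] at h2
  exact h2

lemma hasFDerivAt_derivf_rho (hf : ContDiffOn ℝ 2 f (Set.Ioi 0)) {ξ : Fin (2*n+1) → ℝ}
    (hξ : 0 < U n ξ) :
    HasFDerivAt (fun η => deriv f (rho n η))
      ((deriv (deriv f) (rho n ξ) * ((1/4 : ℝ) * (U n ξ) ^ (-(3:ℝ)/4))) • LU n ξ) ξ := by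
  have hC : ContDiffOn ℝ 1 (deriv f) (Set.Ioi 0) :=
    hf.deriv_of_isOpen isOpen_Ioi (by norm_num)
  have hD : DifferentiableAt ℝ (deriv f) (rho n ξ) :=
    (hC.contDiffAt (Ioi_mem_nhds (rho_pos hξ))).differentiableAt one_ne_zero
  have h := hD.hasDerivAt.comp_hasFDerivAt ξ (hasFDerivAt_rho hξ)
  rwa [smul_smul] at h

lemma XX_frho (hf : ContDiffOn ℝ 2 f (Set.Ioi 0)) {ξ : Fin (2*n+1) → ℝ}
    (hξ : 0 < U n ξ) (i j : Fin (2*n)) :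
    X n i (fun η => X n j (fun y => f (rho n y)) η) ξ
      = deriv (deriv f) (rho n ξ) * ((U n ξ)^(-(3:ℝ)/4) * A n i ξ)
          * ((U n ξ)^(-(3:ℝ)/4) * A n j ξ)
        + deriv f (rho n ξ) * ((U n ξ)^(-(3:ℝ)/4) * XA n i j ξ)
        - 3 * deriv f (rho n ξ) * ((U n ξ)^(-(7:ℝ)/4) * (A n i ξ * A n j ξ)) := by
  have hO : IsOpen {η : Fin (2*n+1) → ℝ | 0 < U n η} :=
    isOpen_lt continuous_const continuous_U
  have hev : (fun η => X n j (fun y => f (rho n y)) η)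
      =ᶠ[nhds ξ] (fun η => deriv f (rho n η) * ((U n η) ^ (-(3:ℝ)/4) * A n j η)) :=
    Filter.eventuallyEq_of_mem (hO.mem_nhds hξ) (fun η hη => X_frho hf hη j)
  rw [X, hev.fderiv_eq]
  have h3 : HasFDerivAt (fun η => A n j η)
      ((hsq n ξ • pj n (emb n j) + ξ (emb n j) • Ls n ξ)
        + eps n j • (ξ (top n) • pj n (emb n (bar n j))
            + ξ (emb n (bar n j)) • pj n (top n))) ξ := by
    exact ((hasFDerivAt_hsq ξ).mul (hasFDerivAt_coord (emb n j) ξ)).add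
      (((hasFDerivAt_coord (top n) ξ).mul
        (hasFDerivAt_coord (emb n (bar n j)) ξ)).const_mul (eps n j))
  have h2 := hasFDerivAt_U34 hξ
  have h1 := hasFDerivAt_derivf_rho hf hξ
  have hphi := h1.fun_mul (h2.fun_mul h3)
  rw [hphi.fderiv]
  simp only [ContinuousLinearMap.add_apply, ContinuousLinearMap.smul_apply,
    smul_eq_mul, pj_apply, Ls_apply_Xvec, LU_self_Xvec, Xvec_emb, Xvec_top]
  unfold XA
  ring

end HeisAux

open HeisAux in
/-- the vector `v = (X_{n+1}ρ,…,X_{2n}ρ, -X_1ρ,…,-X_nρ)` is orthogonal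
to `∇_{H^n}ρ` and is an eigenvector of `D²_{H^n}(f ∘ ρ)` with eigenvalue
`3 (f'(ρ)/ρ) |∇_{H^n}ρ|²`, at any point where `∇_{H^n}ρ ≠ 0`. -/
theorem heisenberg_radial_eigenvector_v (n : ℕ) (f : ℝ → ℝ)
    (hf : ContDiffOn ℝ 2 f (Set.Ioi 0)) (ξ : Fin (2*n+1) → ℝ)
    (hr : 0 < rho n ξ)
    (grad : Fin (2*n) → ℝ) (hgrad : grad = fun i => X n i (rho n) ξ)
    (hne : grad ≠ 0)
    (v : Fin (2*n) → ℝ)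
    (hv : v = fun i : Fin (2*n) =>
      if h : (i : ℕ) < n then
        X n ⟨(i : ℕ) + n, by omega⟩ (rho n) ξ
      else
        -X n ⟨(i : ℕ) - n, by have := i.isLt; omega⟩ (rho n) ξ) :
    (∑ i, v i * grad i = 0) ∧
    (HessH n (fun η => f (rho n η)) ξ).mulVec v =
      (3 * (deriv f (rho n ξ) / rho n ξ) * gradSq n ξ) • v := by
  have hU0 : (0:ℝ) ≤ U n ξ := by
    have : (0:ℝ) ≤ (hsq n ξ)^2 + (ξ (top n))^2 := by positivity
    exact this
  have hU : 0 < U n ξ := by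
    rcases hU0.lt_or_eq with h | h
    · exact h
    · exfalso
      rw [rho_eq, ← h, Real.zero_rpow (by norm_num : (1/4 : ℝ) ≠ 0)] at hr
      exact lt_irrefl _ hr
  -- grad in closed form
  have hgr : ∀ i, grad i = (U n ξ) ^ (-(3:ℝ)/4) * A n i ξ := by
    intro i; rw [hgrad]; exact X_rho hU i
  -- v in closed form
  have hvB : ∀ i, v i = (U n ξ) ^ (-(3:ℝ)/4) * Bv n i ξ := by
    intro i
    simp only [hv]
    by_cases h : (i : ℕ) < n
    · rw [dif_pos h, X_rho hU]
      have hbar : A n (⟨(i:ℕ)+n, by have := i.isLt; omega⟩ : Fin (2*n)) ξ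
          = A n (bar n i) ξ := by
        congr 1
        apply Fin.ext
        rw [bar_val_of_lt h]
      rw [hbar, A_bar]
      have he : eps n i = 1 := by simp [eps, h]
      rw [he]; ring
    · rw [dif_neg h, X_rho hU]
      have hbar : A n (⟨(i:ℕ)-n, by have := i.isLt; omega⟩ : Fin (2*n)) ξ
          = A n (bar n i) ξ := by
        congr 1
        apply Fin.ext
        rw [bar_val_of_ge h]
      rw [hbar, A_bar]
      have he : eps n i = -1 := by simp [eps, h]
      rw [he]; ring
  -- orthogonality
  have horth : ∑ i, v i * grad i = 0 := by
    have h : ∀ i : Fin (2*n), v i * grad i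
        = ((U n ξ)^(-(3:ℝ)/4) * (U n ξ)^(-(3:ℝ)/4)) * (A n i ξ * Bv n i ξ) := by
      intro i; rw [hvB i, hgr i]; ring
    rw [Finset.sum_congr rfl (fun i _ => h i), ← Finset.mul_sum, T3, mul_zero]
  refine ⟨horth, ?_⟩
  -- gradSq in closed form
  have hgs : gradSq n ξ
      = (U n ξ)^(-(3:ℝ)/4) * (U n ξ)^(-(3:ℝ)/4) * (hsq n ξ * U n ξ) := by
    unfold gradSq
    have h : ∀ j : Fin (2*n), (X n j (rho n) ξ)^2
        = ((U n ξ)^(-(3:ℝ)/4) * (U n ξ)^(-(3:ℝ)/4)) * (A n j ξ)^2 := by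
      intro j; rw [X_rho hU]; ring
    rw [Finset.sum_congr rfl (fun j _ => h j), ← Finset.mul_sum, T5]
  -- the mulVec in closed form
  have hsum : ∀ i, (HessH n (fun η => f (rho n η)) ξ).mulVec v i
      = 3 * deriv f (rho n ξ) * ((U n ξ)^(-(3:ℝ)/4) * (U n ξ)^(-(3:ℝ)/4))
          * (hsq n ξ * Bv n i ξ) := by
    intro i
    have hmv : (HessH n (fun η => f (rho n η)) ξ).mulVec v i
        = ∑ j, (X n i (fun η => X n j (fun y => f (rho n y)) η) ξ
            + X n j (fun η => X n i (fun y => f (rho n y)) η) ξ) / 2 * v j := by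
      simp [Matrix.mulVec, dotProduct, HessH]
    rw [hmv]
    have hterm : ∀ j : Fin (2*n),
        (X n i (fun η => X n j (fun y => f (rho n y)) η) ξ
          + X n j (fun η => X n i (fun y => f (rho n y)) η) ξ) / 2 * v j
        = (deriv (deriv f) (rho n ξ)
              * ((U n ξ)^(-(3:ℝ)/4) * (U n ξ)^(-(3:ℝ)/4) * (U n ξ)^(-(3:ℝ)/4)) * A n i ξ
            - 3 * deriv f (rho n ξ)
              * ((U n ξ)^(-(7:ℝ)/4) * (U n ξ)^(-(3:ℝ)/4)) * A n i ξ)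
            * (A n j ξ * Bv n j ξ)
          + (deriv f (rho n ξ) * ((U n ξ)^(-(3:ℝ)/4) * (U n ξ)^(-(3:ℝ)/4)) / 2)
            * ((XA n i j ξ + XA n j i ξ) * Bv n j ξ) := by
      intro j
      rw [XX_frho hf hU i j, XX_frho hf hU j i, hvB j]
      ring
    rw [Finset.sum_congr rfl (fun j _ => hterm j), Finset.sum_add_distrib,
      ← Finset.mul_sum, ← Finset.mul_sum, T3, T4, mul_zero, zero_add]
    ring
  -- put everything together
  funext i
  have hkey : (U n ξ) ^ (-(1/4) : ℝ) * (U n ξ) ^ (-(3:ℝ)/4) * U n ξ = 1 := by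
    rw [← Real.rpow_add hU]
    have e : (-(1/4) : ℝ) + (-(3:ℝ)/4) = -1 := by norm_num
    rw [e, Real.rpow_neg_one]
    exact inv_mul_cancel₀ (ne_of_gt hU)
  have hdiv : deriv f ((U n ξ) ^ (1/4 : ℝ)) / (U n ξ) ^ (1/4 : ℝ)
      = deriv f ((U n ξ) ^ (1/4 : ℝ)) * (U n ξ) ^ (-(1/4) : ℝ) := by
    rw [Real.rpow_neg hU0]
    ring
  simp only [Pi.smul_apply, smul_eq_mul]
  rw [hsum i, hgs, hvB i, rho_eq, hdiv]
  linear_combination (-(3 * deriv f ((U n ξ) ^ (1/4 : ℝ)) * hsq n ξ * Bv n i ξ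
    * ((U n ξ)^(-(3:ℝ)/4) * (U n ξ)^(-(3:ℝ)/4)))) * hkey
end
end
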